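/- arXiv:2604.04550 — 2 statements merged into one kernel-verified Lean document; each statement's English description precedes it below -/
import Mathlib

section
/- Let M be a matroid and 𝓜 a modular cut of M. The truncation Tr_𝓜(M), defined by the rank function rk'(S) = rk(S) − 1 if cl_M(S) ∈ 𝓜 and rk'(S) = rk(S) otherwise, is a matroid, and it equals the contraction (M ∪_𝓜 e)/e of the single-element extension at the new element e. -/
/-!
The independent sets of `Tr_𝓜(M)` are the `M`-independent sets whose closure is not in `𝓜`.
The closures of two sets with independent union form a modular pair, so `𝓜` is closed under
intersecting them. This yields the augmentation axiom, and shows that an independent set whose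
closure lies in `𝓜` has an element whose removal takes the closure out of `𝓜` (otherwise
removing all elements one at a time would put `cl ∅` in `𝓜`). Hence the truncation has rank
`rk S - 1` or `rk S` according as `cl S ∈ 𝓜`, which is `rk_N (S + e) - rk_N {e}` for any
extension `N = M ∪_𝓜 e`, as `rk_N {e} = 1`.
-/

variable {α : Type*}

/-- The rank of a set in a matroid: the supremum of the cardinalities of
independent subsets of the set. -/
noncomputable def Matroid.mrk (M : Matroid α) (X : Set α) : ℕ :=
  sSup (Set.ncard '' {I | M.Indep I ∧ I ⊆ X})

/-- A *modular cut* of a matroid `M`: an upward-closed (within the lattice of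
flats) family of flats of `M` which is closed under meets of modular pairs. -/
def Matroid.IsModularCutFam (M : Matroid α) (𝓜 : Set (Set α)) : Prop :=
  (∀ F ∈ 𝓜, M.IsFlat F) ∧
  (∀ F ∈ 𝓜, ∀ G : Set α, M.IsFlat G → F ⊆ G → G ∈ 𝓜) ∧
  (∀ F ∈ 𝓜, ∀ G ∈ 𝓜,
    M.mrk (F ∪ G) + M.mrk (F ∩ G) = M.mrk F + M.mrk G → F ∩ G ∈ 𝓜)

/-- `N` is the single-element extension `M ∪_𝓜 e` of `M` along the modular cut
`𝓜`: it is the matroid on `M.E ∪ {e}` whose rank function satisfies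
`rk_N S = rk_M S` for `S ⊆ M.E`, and `rk_N (S ∪ {e}) = rk_M S` if
`cl_M S ∈ 𝓜`, and `rk_M S + 1` otherwise. -/
def Matroid.IsSingleElemExt (M : Matroid α) (𝓜 : Set (Set α)) (e : α)
    (N : Matroid α) : Prop :=
  N.E = insert e M.E ∧
  (∀ S : Set α, S ⊆ M.E → N.mrk S = M.mrk S) ∧
  (∀ S : Set α, S ⊆ M.E → M.closure S ∈ 𝓜 → N.mrk (insert e S) = M.mrk S) ∧
  (∀ S : Set α, S ⊆ M.E → M.closure S ∉ 𝓜 →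
    N.mrk (insert e S) = M.mrk S + 1)

namespace Matroid

open Set

section Rank

variable {M : Matroid α} {I J X Y : Set α}

lemma mrk_eq_of_forall_le {n : ℕ} (hI : M.Indep I) (hIX : I ⊆ X) (hIn : I.ncard = n)
    (h : ∀ J, M.Indep J → J ⊆ X → J.ncard ≤ n) : M.mrk X = n :=
  IsGreatest.csSup_eq ⟨⟨I, ⟨hI, hIX⟩, hIn⟩, by rintro _ ⟨J, ⟨hJ, hJX⟩, rfl⟩; exact h J hJ hJX⟩

variable [M.RankFinite]

lemma IsBasis'.mrk_eq (hI : M.IsBasis' I X) : M.mrk X = I.ncard := by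
  refine mrk_eq_of_forall_le hI.indep hI.subset rfl fun J hJ hJX ↦ ?_
  have hle : J.encard ≤ I.encard := hI.encard_eq_eRk ▸ hJ.encard_le_eRk_of_subset hJX
  rwa [← hJ.finite.cast_ncard_eq, ← hI.indep.finite.cast_ncard_eq, Nat.cast_le] at hle

lemma Indep.mrk_eq (hI : M.Indep I) : M.mrk I = I.ncard :=
  hI.isBasis_self.isBasis'.mrk_eq

lemma cast_mrk (X : Set α) : (M.mrk X : ℕ∞) = M.eRk X := by
  obtain ⟨I, hI⟩ := M.exists_isBasis' X
  rw [hI.mrk_eq, hI.indep.finite.cast_ncard_eq, hI.encard_eq_eRk]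

lemma mrk_mono (hXY : X ⊆ Y) : M.mrk X ≤ M.mrk Y := by
  rw [← Nat.cast_le (α := ℕ∞), cast_mrk, cast_mrk]
  exact M.eRk_mono hXY

lemma mrk_closure_eq (X : Set α) : M.mrk (M.closure X) = M.mrk X := by
  rw [← Nat.cast_inj (R := ℕ∞), cast_mrk, cast_mrk, eRk_closure_eq]

lemma mrk_inter_add_mrk_union_le (X Y : Set α) :
    M.mrk (X ∩ Y) + M.mrk (X ∪ Y) ≤ M.mrk X + M.mrk Y := by
  have h := M.eRk_inter_add_eRk_union_le X Y
  simp only [← cast_mrk] at h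
  exact_mod_cast h

lemma Indep.isBasis'_of_mrk_le (hI : M.Indep I) (hIX : I ⊆ X) (h : M.mrk X ≤ I.ncard) :
    M.IsBasis' I X := by
  refine hI.isBasis'_of_eRk_ge hI.finite hIX ?_
  rw [← cast_mrk, ← cast_mrk, hI.mrk_eq]
  exact_mod_cast h

lemma Indep.mrk_closure_union_add_mrk_closure_inter (h : M.Indep (I ∪ J)) :
    M.mrk (M.closure I ∪ M.closure J) + M.mrk (M.closure I ∩ M.closure J) =
      M.mrk (M.closure I) + M.mrk (M.closure J) := by
  have hI := h.subset subset_union_left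
  have hJ := h.subset subset_union_right
  have hinter : M.mrk (M.closure I ∩ M.closure J) = (I ∩ J).ncard := by
    rw [← h.closure_inter_eq_inter_closure, mrk_closure_eq,
      (h.subset (inter_subset_left.trans subset_union_left)).mrk_eq]
  have hunion : (I ∪ J).ncard ≤ M.mrk (M.closure I ∪ M.closure J) :=
    h.mrk_eq ▸ mrk_mono (union_subset_union (M.subset_closure I) (M.subset_closure J))
  have hsubmod := M.mrk_inter_add_mrk_union_le (M.closure I) (M.closure J)
  have hcard := ncard_union_add_ncard_inter I J hI.finite hJ.finite
  rw [mrk_closure_eq, mrk_closure_eq, hI.mrk_eq, hJ.mrk_eq] at hsubmod ⊢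
  omega

end Rank

namespace IsModularCutFam

variable {M : Matroid α} {𝓜 : Set (Set α)} {I J B K : Set α}

lemma closure_mem_of_subset (h𝓜 : M.IsModularCutFam 𝓜) (hIJ : I ⊆ J)
    (hI : M.closure I ∈ 𝓜) : M.closure J ∈ 𝓜 :=
  h𝓜.2.1 _ hI _ (M.isFlat_closure J) (M.closure_subset_closure hIJ)

variable [M.RankFinite]

lemma closure_inter_mem (h𝓜 : M.IsModularCutFam 𝓜) (hIJ : M.Indep (I ∪ J))
    (hI : M.closure I ∈ 𝓜) (hJ : M.closure J ∈ 𝓜) : M.closure (I ∩ J) ∈ 𝓜 := by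
  rw [hIJ.closure_inter_eq_inter_closure]
  exact h𝓜.2.2 _ hI _ hJ hIJ.mrk_closure_union_add_mrk_closure_inter

lemma closure_diff_mem (h𝓜 : M.IsModularCutFam 𝓜) (hB : M.Indep B) (hBM : M.closure B ∈ 𝓜)
    (hK : K.Finite) (hKM : ∀ x ∈ K, M.closure (B \ {x}) ∈ 𝓜) : M.closure (B \ K) ∈ 𝓜 := by
  induction K, hK using Set.Finite.induction_on with
  | empty => simpa using hBM
  | @insert a K _ _ ih =>
    rw [← singleton_union, ← sdiff_inter_sdiff]
    exact h𝓜.closure_inter_mem (hB.subset (union_subset sdiff_subset sdiff_subset))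
      (hKM a (mem_insert a K)) (ih fun x hx ↦ hKM x (mem_insert_of_mem a hx))

lemma exists_closure_diff_singleton_notMem (h𝓜 : M.IsModularCutFam 𝓜)
    (hp : M.closure ∅ ∉ 𝓜) (hB : M.Indep B) (hBM : M.closure B ∈ 𝓜) :
    ∃ x ∈ B, M.closure (B \ {x}) ∉ 𝓜 := by
  by_contra! h
  exact hp (by simpa using h𝓜.closure_diff_mem hB hBM hB.finite h)

end IsModularCutFam

section Truncation

variable {M : Matroid α} [M.RankFinite] {𝓜 : Set (Set α)} {I J S : Set α}

lemma IsModularCutFam.exists_truncation_augment (h𝓜 : M.IsModularCutFam 𝓜)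
    (hI : M.Indep I) (hIM : M.closure I ∉ 𝓜) (hJ : M.Indep J) (hJM : M.closure J ∉ 𝓜)
    (hIJ : I.encard < J.encard) :
    ∃ x ∈ J, x ∉ I ∧ M.Indep (insert x I) ∧ M.closure (insert x I) ∉ 𝓜 := by
  by_contra! h
  obtain ⟨x, ⟨hxJ, hxI⟩, hxIi⟩ := hI.augment hJ hIJ
  have hxM := h x hxJ hxI hxIi
  -- Every `z ∈ J` outside `cl (I + x)` would give a modular pair `cl (I + x)`, `cl (I + z)` in `𝓜`
  -- meeting in `cl I`.
  have hJsub : J ⊆ M.closure (insert x I) := by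
    intro z hzJ
    by_contra hzcl
    have hzxI : M.Indep (insert z (insert x I)) :=
      hxIi.insert_indep_iff.2 (Or.inl ⟨hJ.subset_ground hzJ, hzcl⟩)
    have hsub := M.subset_closure _ hxIi.subset_ground
    have hzx : z ≠ x := fun hzx ↦ hzcl (hsub (hzx ▸ mem_insert x I))
    have hzI : z ∉ I := fun hzI ↦ hzcl (hsub (mem_insert_of_mem x hzI))
    have hzM := h z hzJ hzI (hzxI.subset (insert_subset_insert (subset_insert x I)))
    have hinter : insert x I ∩ insert z I = I := by
      ext w; simp only [mem_inter_iff, mem_insert_iff]; grind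
    refine hIM (hinter ▸ h𝓜.closure_inter_mem (hzxI.subset ?_) hxM hzM)
    exact union_subset (subset_insert z _) (insert_subset_insert (subset_insert x I))
  have hJbasis : M.IsBasis' J (M.closure (insert x I)) := by
    refine hJ.isBasis'_of_eRk_ge hJ.finite hJsub ?_
    rw [eRk_closure_eq, hxIi.eRk_eq_encard, hJ.eRk_eq_encard, encard_insert_of_notMem hxI]
    exact Order.add_one_le_of_lt hIJ
  exact hJM (by rwa [hJbasis.closure_eq_closure, closure_closure])

/-- The truncation `Tr_𝓜(M)`, defined by its independent sets rather than its rank function. -/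
def truncateBy (M : Matroid α) [M.RankFinite] (𝓜 : Set (Set α)) (h𝓜 : M.IsModularCutFam 𝓜)
    (hp : M.closure ∅ ∉ 𝓜) : Matroid α :=
  (IndepMatroid.ofBddAugment M.E (fun I ↦ M.Indep I ∧ M.closure I ∉ 𝓜) ⟨M.empty_indep, hp⟩
    (fun _ _ hJ hIJ ↦ ⟨hJ.1.subset hIJ, fun hI ↦ hJ.2 (h𝓜.closure_mem_of_subset hIJ hI)⟩)
    (fun _ _ hI hJ hIJ ↦ h𝓜.exists_truncation_augment hI.1 hI.2 hJ.1 hJ.2 hIJ)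
    ⟨M.eRank.toNat, fun _ hI ↦
      (ENat.natCast_toNat (M.eRank_ne_top_iff.2 ‹_›)).symm ▸ hI.1.encard_le_eRank⟩
    (fun _ hI ↦ hI.1.subset_ground)).matroid

variable {h𝓜 : M.IsModularCutFam 𝓜} {hp : M.closure ∅ ∉ 𝓜}

@[simp] lemma truncateBy_ground : (M.truncateBy 𝓜 h𝓜 hp).E = M.E := rfl

@[simp] lemma truncateBy_indep_iff :
    (M.truncateBy 𝓜 h𝓜 hp).Indep I ↔ M.Indep I ∧ M.closure I ∉ 𝓜 := by
  simp [truncateBy]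

lemma mrk_truncateBy_of_notMem (hS : M.closure S ∉ 𝓜) :
    (M.truncateBy 𝓜 h𝓜 hp).mrk S = M.mrk S := by
  obtain ⟨I, hI⟩ := M.exists_isBasis' S
  refine mrk_eq_of_forall_le ?_ hI.subset hI.mrk_eq.symm fun J hJ hJS ↦ ?_
  · exact truncateBy_indep_iff.2 ⟨hI.indep, hI.closure_eq_closure ▸ hS⟩
  · exact (truncateBy_indep_iff.1 hJ).1.mrk_eq ▸ mrk_mono hJS

lemma mrk_truncateBy_of_mem (hS : M.closure S ∈ 𝓜) :
    (M.truncateBy 𝓜 h𝓜 hp).mrk S = M.mrk S - 1 := by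
  obtain ⟨I, hI⟩ := M.exists_isBasis' S
  obtain ⟨x, hxI, hxM⟩ :=
    h𝓜.exists_closure_diff_singleton_notMem hp hI.indep (hI.closure_eq_closure ▸ hS)
  have hcard := ncard_sdiff_singleton_add_one hxI hI.indep.finite
  refine mrk_eq_of_forall_le (I := I \ {x}) ?_ (sdiff_subset.trans hI.subset)
    (by rw [hI.mrk_eq]; omega) fun J hJ hJS ↦ ?_
  · exact truncateBy_indep_iff.2 ⟨hI.indep.subset sdiff_subset, hxM⟩
  · obtain ⟨hJi, hJM⟩ := truncateBy_indep_iff.1 hJ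
    have hle : J.ncard ≤ M.mrk S := hJi.mrk_eq ▸ mrk_mono hJS
    have hne : J.ncard ≠ M.mrk S := fun heq ↦
      hJM ((hJi.isBasis'_of_mrk_le hJS heq.ge).closure_eq_closure ▸ hS)
    omega

end Truncation

end Matroid

open Matroid Set in
theorem truncation_exists_eq_contract_general (M : Matroid α) [M.Finite]
    (𝓜 : Set (Set α)) (h𝓜 : M.IsModularCutFam 𝓜)
    (hproper : M.closure ∅ ∉ 𝓜) (e : α) :
    ∃ T : Matroid α, T.E = M.E ∧
      (∀ S : Set α, S ⊆ M.E → M.closure S ∈ 𝓜 → T.mrk S = M.mrk S - 1) ∧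
      (∀ S : Set α, S ⊆ M.E → M.closure S ∉ 𝓜 → T.mrk S = M.mrk S) ∧
      (∀ N : Matroid α, M.IsSingleElemExt 𝓜 e N →
        ∀ S : Set α, S ⊆ M.E →
          T.mrk S = N.mrk (insert e S) - N.mrk {e}) := by
  refine ⟨M.truncateBy 𝓜 h𝓜 hproper, truncateBy_ground, fun S _ hS ↦ mrk_truncateBy_of_mem hS,
    fun S _ hS ↦ mrk_truncateBy_of_notMem hS, ?_⟩
  rintro N ⟨-, -, hmem, hnotMem⟩ S hSE
  have he : N.mrk {e} = 1 := by
    simpa [M.empty_indep.mrk_eq] using hnotMem ∅ (empty_subset _) hproper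
  by_cases hS : M.closure S ∈ 𝓜
  · rw [mrk_truncateBy_of_mem hS, hmem S hSE hS, he]
  · rw [mrk_truncateBy_of_notMem hS, hnotMem S hSE hS, he, Nat.add_sub_cancel]

/-- the truncation `Tr_𝓜(M)` of `M` along a (proper) modular cut
`𝓜`, defined by the rank function `rk'(S) = rk(S) − 1` if `cl_M(S) ∈ 𝓜` and
`rk'(S) = rk(S)` otherwise, is a matroid, and it equals the contraction
`(M ∪_𝓜 e)/e` of the single-element extension at the new element `e` (the
contraction has rank function `S ↦ rk_N(S ∪ {e}) − rk_N({e})`). -/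
theorem truncation_exists_eq_contract (M : Matroid α) [M.Finite]
    (𝓜 : Set (Set α)) (h𝓜 : M.IsModularCutFam 𝓜)
    (hproper : M.closure ∅ ∉ 𝓜) (e : α) (he : e ∉ M.E) :
    ∃ T : Matroid α, T.E = M.E ∧
      (∀ S : Set α, S ⊆ M.E → M.closure S ∈ 𝓜 → T.mrk S = M.mrk S - 1) ∧
      (∀ S : Set α, S ⊆ M.E → M.closure S ∉ 𝓜 → T.mrk S = M.mrk S) ∧
      (∀ N : Matroid α, M.IsSingleElemExt 𝓜 e N →
        ∀ S : Set α, S ⊆ M.E →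
          T.mrk S = N.mrk (insert e S) - N.mrk {e}) :=
  truncation_exists_eq_contract_general M 𝓜 h𝓜 hproper e
end

section
/- Let M be a matroid with modular cut 𝓜. The lattice of flats of the truncation Tr_𝓜(M) consists exactly of those flats F of M that are not in the collar C_𝓜, where C_𝓜 is the set of flats F ∉ 𝓜 such that cl_M(F ∪ {a}) ∈ 𝓜 for some element a of the ground set. -/
variable {α : Type*}

/-! The rank of `Tr_𝓜(M)` depends only on `rk_M` and `cl_M`, so `cl_M X ⊆ cl_T X` and every
flat of the truncation is a flat of `M`. For a flat `F` of `M` and `e ∉ F` we have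
`rk_M (F + e) = rk_M F + 1`, and the truncated ranks of `F + e` and `F` agree exactly when the
rank drops at `F + e` but not at `F`, i.e. when `F ∉ 𝓜` and `cl_M (F + e) ∈ 𝓜`: if `F ∈ 𝓜`,
both drop, and `rk_M F ≥ 1` because `𝓜` is proper. -/

open Set

namespace Matroid

variable {M : Matroid α} {X Y F : Set α} {e : α}

section Rank

variable [M.RankFinite]

lemma cast_mrk_eq_eRk : (M.mrk X : ℕ∞) = M.eRk X := by
  obtain ⟨I, hI⟩ := M.exists_isBasis' X
  have hIfin : I.Finite := hI.indep.finite
  have hmax : IsGreatest (ncard '' {J | M.Indep J ∧ J ⊆ X}) I.ncard := by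
    refine ⟨⟨I, ⟨hI.indep, hI.subset⟩, rfl⟩, ?_⟩
    rintro _ ⟨J, ⟨hJ, hJX⟩, rfl⟩
    have hle : J.encard ≤ I.encard := hI.encard_eq_eRk ▸ hJ.encard_le_eRk_of_subset hJX
    rwa [← hJ.finite.cast_ncard_eq, ← hIfin.cast_ncard_eq, Nat.cast_le] at hle
  rw [mrk, hmax.csSup_eq, hIfin.cast_ncard_eq, hI.encard_eq_eRk]

lemma mrk_eq_mrk_of_closure_eq (h : M.closure X = M.closure Y) : M.mrk X = M.mrk Y := by
  rw [← Nat.cast_inj (R := ℕ∞), cast_mrk_eq_eRk, cast_mrk_eq_eRk, ← eRk_closure_eq, h,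
    eRk_closure_eq]

lemma mrk_insert_eq_add_one (he : e ∈ M.E \ M.closure X) :
    M.mrk (insert e X) = M.mrk X + 1 := by
  rw [← Nat.cast_inj (R := ℕ∞), Nat.cast_add, Nat.cast_one, cast_mrk_eq_eRk, cast_mrk_eq_eRk,
    eRk_insert_eq_add_one he]

lemma mem_closure_iff_mrk_insert_eq (he : e ∈ M.E) :
    e ∈ M.closure X ↔ M.mrk (insert e X) = M.mrk X := by
  refine ⟨fun h ↦ mrk_eq_mrk_of_closure_eq (closure_insert_eq_of_mem_closure h),
    fun h ↦ by_contra fun heX ↦ ?_⟩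
  rw [mrk_insert_eq_add_one ⟨he, heX⟩] at h
  omega

lemma isFlat_iff_forall_mrk_insert_ne (hF : F ⊆ M.E) :
    M.IsFlat F ↔ ∀ e ∈ M.E \ F, M.mrk (insert e F) ≠ M.mrk F := by
  rw [isFlat_iff_closure_eq]
  refine ⟨fun h e ⟨heE, heF⟩ hrk ↦ heF ?_, fun h ↦ ?_⟩
  · rwa [← h, mem_closure_iff_mrk_insert_eq heE]
  refine subset_antisymm (fun e he ↦ ?_) (M.subset_closure F)
  have heE : e ∈ M.E := M.closure_subset_ground F he
  by_contra heF
  exact h e ⟨heE, heF⟩ ((mem_closure_iff_mrk_insert_eq heE).1 he)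

lemma IsFlat.mrk_pos (hF : M.IsFlat F) (hne : F ≠ M.closure ∅) : 0 < M.mrk F := by
  refine Nat.pos_of_ne_zero fun h0 ↦ hne ?_
  have hzero : M.eRk F = 0 := by rw [← cast_mrk_eq_eRk, h0, Nat.cast_zero]
  exact ((eRk_eq_zero_iff hF.subset_ground).1 hzero).antisymm hF.loops_subset

end Rank

/-- `T` is the truncation `Tr_𝓜(M)`, described through its rank function. -/
structure IsTruncation (M : Matroid α) (𝓜 : Set (Set α)) (T : Matroid α) : Prop where
  ground_eq : T.E = M.E
  mrk_of_closure_mem : ∀ S ⊆ M.E, M.closure S ∈ 𝓜 → T.mrk S = M.mrk S - 1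
  mrk_of_closure_notMem : ∀ S ⊆ M.E, M.closure S ∉ 𝓜 → T.mrk S = M.mrk S

namespace IsTruncation

variable {𝓜 : Set (Set α)} {T : Matroid α} [M.RankFinite]

lemma mrk_eq_of_closure_eq (hT : M.IsTruncation 𝓜 T) (hX : X ⊆ M.E) (hY : Y ⊆ M.E)
    (h : M.closure X = M.closure Y) : T.mrk X = T.mrk Y := by
  by_cases hX𝓜 : M.closure X ∈ 𝓜
  · rw [hT.mrk_of_closure_mem X hX hX𝓜, hT.mrk_of_closure_mem Y hY (h ▸ hX𝓜),
      mrk_eq_mrk_of_closure_eq h]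
  · rw [hT.mrk_of_closure_notMem X hX hX𝓜, hT.mrk_of_closure_notMem Y hY (h ▸ hX𝓜),
      mrk_eq_mrk_of_closure_eq h]

lemma closure_subset_closure [T.RankFinite] (hT : M.IsTruncation 𝓜 T) (hX : X ⊆ M.E) :
    M.closure X ⊆ T.closure X := by
  intro e he
  have heE : e ∈ M.E := M.closure_subset_ground X he
  rw [mem_closure_iff_mrk_insert_eq (hT.ground_eq ▸ heE)]
  exact hT.mrk_eq_of_closure_eq (insert_subset heE hX) hX (closure_insert_eq_of_mem_closure he)

lemma isFlat_of_isFlat [T.RankFinite] (hT : M.IsTruncation 𝓜 T) (hF : T.IsFlat F) :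
    M.IsFlat F := by
  have hFE : F ⊆ M.E := hT.ground_eq ▸ hF.subset_ground
  rw [isFlat_iff_closure_eq]
  exact ((hT.closure_subset_closure hFE).trans hF.closure.subset).antisymm (M.subset_closure F)

lemma mrk_insert_eq_iff (hT : M.IsTruncation 𝓜 T)
    (h𝓜 : ∀ F ∈ 𝓜, ∀ G : Set α, M.IsFlat G → F ⊆ G → G ∈ 𝓜) (hproper : M.closure ∅ ∉ 𝓜)
    (hF : M.IsFlat F) (he : e ∈ M.E \ F) :
    T.mrk (insert e F) = T.mrk F ↔ F ∉ 𝓜 ∧ M.closure (insert e F) ∈ 𝓜 := by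
  have hFE : F ⊆ M.E := hF.subset_ground
  have heFE : insert e F ⊆ M.E := insert_subset he.1 hFE
  have hrk : M.mrk (insert e F) = M.mrk F + 1 := mrk_insert_eq_add_one (by rwa [hF.closure])
  by_cases hF𝓜 : F ∈ 𝓜
  · have hpos : 0 < M.mrk F := hF.mrk_pos (ne_of_mem_of_not_mem hF𝓜 hproper)
    have hcl : M.closure (insert e F) ∈ 𝓜 :=
      h𝓜 F hF𝓜 _ (isFlat_closure _) (M.subset_closure_of_subset (subset_insert e F))
    rw [hT.mrk_of_closure_mem _ heFE hcl, hT.mrk_of_closure_mem F hFE (by rwa [hF.closure]), hrk]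
    simp only [hF𝓜, not_true_eq_false, false_and, iff_false]
    omega
  · by_cases hcl : M.closure (insert e F) ∈ 𝓜
    · rw [hT.mrk_of_closure_mem _ heFE hcl, hT.mrk_of_closure_notMem F hFE (by rwa [hF.closure]),
        hrk]
      simp [hF𝓜, hcl]
    · rw [hT.mrk_of_closure_notMem _ heFE hcl,
        hT.mrk_of_closure_notMem F hFE (by rwa [hF.closure]), hrk]
      simp [hcl]

lemma isFlat_iff [T.RankFinite] (hT : M.IsTruncation 𝓜 T)
    (h𝓜 : ∀ F ∈ 𝓜, ∀ G : Set α, M.IsFlat G → F ⊆ G → G ∈ 𝓜) (hproper : M.closure ∅ ∉ 𝓜)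
    (hF : M.IsFlat F) :
    T.IsFlat F ↔ ¬ (F ∉ 𝓜 ∧ ∃ e ∈ M.E, M.closure (insert e F) ∈ 𝓜) := by
  rw [isFlat_iff_forall_mrk_insert_ne (hT.ground_eq ▸ hF.subset_ground), hT.ground_eq]
  refine ⟨fun h ⟨hF𝓜, e, heE, hcl⟩ ↦ ?_, fun h e he hrk ↦ ?_⟩
  · have heF : e ∉ F := fun heF ↦ hF𝓜 (by rwa [insert_eq_of_mem heF, hF.closure] at hcl)
    exact h e ⟨heE, heF⟩ ((hT.mrk_insert_eq_iff h𝓜 hproper hF ⟨heE, heF⟩).2 ⟨hF𝓜, hcl⟩)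
  · obtain ⟨hF𝓜, hcl⟩ := (hT.mrk_insert_eq_iff h𝓜 hproper hF he).1 hrk
    exact h ⟨hF𝓜, e, he.1, hcl⟩

end IsTruncation

end Matroid

/-- the flats of the truncation `Tr_𝓜(M)` are exactly the flats
of `M` that do not lie in the collar
`C_𝓜 = {F flat of M : F ∉ 𝓜 and cl_M(F ∪ {a}) ∈ 𝓜 for some a ∈ E(M)}`. -/
theorem truncation_flats (M : Matroid α) [M.Finite] (𝓜 : Set (Set α))
    (h𝓜 : M.IsModularCutFam 𝓜) (hproper : M.closure ∅ ∉ 𝓜)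
    (T : Matroid α) (hTE : T.E = M.E)
    (hT1 : ∀ S : Set α, S ⊆ M.E → M.closure S ∈ 𝓜 → T.mrk S = M.mrk S - 1)
    (hT2 : ∀ S : Set α, S ⊆ M.E → M.closure S ∉ 𝓜 → T.mrk S = M.mrk S) :
    {F : Set α | T.IsFlat F} =
      {F : Set α | M.IsFlat F} \
        {F : Set α | M.IsFlat F ∧ F ∉ 𝓜 ∧
          ∃ a ∈ M.E, M.closure (insert a F) ∈ 𝓜} := by
  have : T.Finite := ⟨hTE ▸ M.ground_finite⟩
  have hT : M.IsTruncation 𝓜 T := ⟨hTE, hT1, hT2⟩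
  ext F
  by_cases hF : M.IsFlat F
  · simp only [mem_ofPred_eq, mem_sdiff, hT.isFlat_iff h𝓜.2.1 hproper hF, hF, true_and]
  · exact iff_of_false (fun hTF ↦ hF (hT.isFlat_of_isFlat hTF)) fun h ↦ hF h.1
end
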